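/- Fix 0 < t ≤ T and q ∈ ℝ^d. Let u : ℝ × ℝ^d → ℝ be C¹ and let r : [0,t] → ℝ^d be C¹ with r(t) = q. Assume: (i) for every τ ∈ [0,t], u(τ, r(τ)) = ∫₀^τ [ L(r(s), ṙ(s)) + ∫_Ω Φ(r(s) − Γ(s,ω̃)) dω̃ ] ds + ∫_Ω Ψ(r(0) − Γ(0,ω̃)) dω̃; (ii) ∇_q u(t, r(t)) = ∇_v L(r(t), ṙ(t)); (iii) H : ℝ^d × ℝ^d → ℝ satisfies L(q', v) + H(q', ∇_v L(q', v)) = ⟨v, ∇_v L(q', v)⟩ for all q', v ∈ ℝ^d. Then u satisfies the Hamilton–Jacobi equation at (t,q): ∂_t u(t, q) + H(q, ∇_q u(t, q)) − ∫_Ω Φ(q − Γ(t,ω̃)) dω̃ = 0. -/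

import Mathlib

/-!
Differentiate `τ ↦ u(τ, r(τ))` at `τ = t` in two ways. By the chain rule the derivative is
`∂_t u(t,q) + ⟨∇_q u(t,q), ṙ(t)⟩`; by the value identity (i) and the fundamental theorem of
calculus it is the integrand at `t`, `L(q, ṙ(t)) + ∫_Ω Φ(q − Γ(t,ω̃)) dω̃`; the integrand is
continuous by dominated convergence, `Φ` being bounded on the compact set where `r − Γ` lives. The gradient identity (ii)
turns `⟨∇_q u, ṙ⟩` into `⟨ṙ, ∇_v L⟩`, and the Legendre identity (iii) rewrites this as `L + H`.
-/

open MeasureTheory Set Topology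
open scoped RealInnerProductSpace

theorem hasDerivWithinAt_comp_path {E : Type*} [NormedAddCommGroup E] [InnerProductSpace ℝ E]
    [CompleteSpace E] {u : ℝ → E → ℝ} {r : ℝ → E} {v : E} {s : Set ℝ} {t : ℝ}
    (hu : DifferentiableAt ℝ (Function.uncurry u) (t, r t)) (hr : HasDerivWithinAt r v s t) :
    HasDerivWithinAt (fun τ => u τ (r τ))
      (deriv (fun τ => u τ (r t)) t + ⟪gradient (u t) (r t), v⟫) s t := by
  set A := fderiv ℝ (Function.uncurry u) (t, r t)
  have hA : HasFDerivAt (Function.uncurry u) A (t, r t) := hu.hasFDerivAt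
  have htime : HasDerivAt (fun τ => u τ (r t)) (A (1, 0)) t :=
    (hA.comp_hasDerivAt t ((hasDerivAt_id t).prodMk (hasDerivAt_const t (r t))) :)
  have hspace : ∀ w, ⟪gradient (u t) (r t), w⟫ = A (0, w) := by
    intro w
    have hslice : HasFDerivAt (u t) (A.comp (ContinuousLinearMap.inr ℝ ℝ E)) (r t) :=
      hA.comp (r t) ((hasFDerivAt_const t (r t)).prodMk (hasFDerivAt_id (r t)))
    rw [inner_gradient_left, hslice.fderiv]
    rfl
  have hsplit : A (1, v) = A (1, 0) + A (0, v) := by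
    rw [← map_add, Prod.mk_add_mk, add_zero, zero_add]
  rw [htime.deriv, hspace, ← hsplit]
  exact hA.comp_hasDerivWithinAt t ((hasDerivWithinAt_id t s).prodMk hr)

theorem hasDerivWithinAt_setIntegral_Icc_right {E : Type*} [NormedAddCommGroup E]
    [NormedSpace ℝ E] [CompleteSpace E] {g : ℝ → E} {a b : ℝ} (hab : a < b)
    (hg : ContinuousOn g (Icc a b)) :
    HasDerivWithinAt (fun τ => ∫ s in Icc a τ, g s) (g b) (Icc a b) b := by
  have hnhds : 𝓝[Icc a b] b = 𝓝[≤] b := nhdsWithin_Icc_eq_nhdsLE hab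
  have hmeas : StronglyMeasurableAtFilter g (𝓝[≤] b) := by
    simpa only [hnhds] using hg.stronglyMeasurableAtFilter_nhdsWithin measurableSet_Icc b
  have hcont : ContinuousWithinAt g (Iic b) b := by
    simpa only [ContinuousWithinAt, hnhds] using hg b (right_mem_Icc.2 hab.le)
  have hFTC : HasDerivWithinAt (fun τ => ∫ s in a..τ, g s) (g b) (Iic b) b :=
    intervalIntegral.integral_hasDerivWithinAt_right (hg.intervalIntegrable_of_Icc hab.le)
      hmeas hcont
  have hIcc : ∀ τ ∈ Icc a b, ∫ s in Icc a τ, g s = ∫ s in a..τ, g s := fun τ hτ => by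
    rw [intervalIntegral.integral_of_le hτ.1, integral_Icc_eq_integral_Ioc]
  exact (hFTC.mono Icc_subset_Iic_self).congr hIcc (hIcc b (right_mem_Icc.2 hab.le))

theorem continuousOn_integral_comp_sub {X α E F : Type*} [TopologicalSpace X]
    [FirstCountableTopology X] [MeasurableSpace α] [NormedAddCommGroup E] [ProperSpace E]
    [NormedAddCommGroup F] [NormedSpace ℝ F] {μ : Measure α} [IsFiniteMeasure μ] {Φ : E → F} {r : X → E}
    {Γ : X → α → E} {S : Set X} (hΦ : Continuous Φ) (hS : IsCompact S) (hr : ContinuousOn r S)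
    (hΓb : ∃ C, ∀ x ∈ S, ∀ ω, ‖Γ x ω‖ ≤ C) (hΓm : ∀ x ∈ S, AEStronglyMeasurable (Γ x) μ)
    (hΓc : ∀ ω, ContinuousOn (fun x => Γ x ω) S) :
    ContinuousOn (fun x => ∫ ω, Φ (r x - Γ x ω) ∂μ) S := by
  obtain ⟨CΓ, hCΓ⟩ := hΓb
  obtain ⟨Cr, hCr⟩ := hS.exists_bound_of_continuousOn hr
  obtain ⟨M, hM⟩ := (isCompact_closedBall (0 : E) (Cr + CΓ)).exists_bound_of_continuousOn
    hΦ.continuousOn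
  have hbound : ∀ x ∈ S, ∀ ω, ‖Φ (r x - Γ x ω)‖ ≤ M := fun x hx ω =>
    hM _ (mem_closedBall_zero_iff.2
      ((norm_sub_le _ _).trans (add_le_add (hCr x hx) (hCΓ x hx ω))))
  exact continuousOn_of_dominated
    (fun x hx => hΦ.comp_aestronglyMeasurable (aestronglyMeasurable_const.sub (hΓm x hx)))
    (fun x hx => ae_of_all μ (hbound x hx)) (integrable_const M)
    (ae_of_all μ fun ω => hΦ.comp_continuousOn (hr.sub (hΓc ω)))

theorem hamilton_jacobi_at_terminal_point_general
    (d : ℕ)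
    (L : EuclideanSpace ℝ (Fin d) → EuclideanSpace ℝ (Fin d) → ℝ)
    (Φ Ψ : EuclideanSpace ℝ (Fin d) → ℝ)
    (Γ : ℝ → ℝ → EuclideanSpace ℝ (Fin d))
    (t : ℝ) (ht : 0 < t)
    -- `L`, `Φ`, `Ψ` are `C³`; `Φ`, `Ψ` even with bounded derivatives of order 1,2,3
    (hL : ContDiff ℝ 3 (fun p : EuclideanSpace ℝ (Fin d) × EuclideanSpace ℝ (Fin d) => L p.1 p.2))
    (hΦ : ContDiff ℝ 3 Φ)
    -- `Γ` is jointly measurable, bounded, continuous in time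
    (hΓm : Measurable (fun p : ℝ × ℝ => Γ p.1 p.2))
    (hΓb : ∃ C, ∀ s ω, ‖Γ s ω‖ ≤ C)
    (hΓc : ∀ ω, Continuous (fun s => Γ s ω))
    (q : EuclideanSpace ℝ (Fin d))
    (H : EuclideanSpace ℝ (Fin d) → EuclideanSpace ℝ (Fin d) → ℝ)
    (u : ℝ → EuclideanSpace ℝ (Fin d) → ℝ)
    (hu : ContDiff ℝ 1 (fun p : ℝ × EuclideanSpace ℝ (Fin d) => u p.1 p.2))
    (r : ℝ → EuclideanSpace ℝ (Fin d))
    (hr : ContDiffOn ℝ 1 r (Icc 0 t)) (hrt : r t = q)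
    -- (i) the value identity along `r`
    (hval : ∀ τ ∈ Icc (0:ℝ) t,
      u τ (r τ) =
        (∫ s in Icc (0:ℝ) τ,
            (L (r s) (derivWithin r (Icc (0:ℝ) t) s)
              + ∫ ω in Ioo (0:ℝ) 1, Φ (r s - Γ s ω)))
          + ∫ ω in Ioo (0:ℝ) 1, Ψ (r 0 - Γ 0 ω))
    -- (ii) `∇_q u(t, r(t)) = ∇_v L(r(t), ṙ(t))`
    (hgrad : gradient (u t) (r t) =
      gradient (fun v => L (r t) v) (derivWithin r (Icc (0:ℝ) t) t))
    -- (iii) the Legendre identity for `H`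
    (hLegendre : ∀ q' v : EuclideanSpace ℝ (Fin d),
      L q' v + H q' (gradient (fun v' => L q' v') v) =
        ⟪v, gradient (fun v' => L q' v') v⟫) :
    deriv (fun s => u s q) t + H q (gradient (u t) q)
      - (∫ ω in Ioo (0:ℝ) 1, Φ (q - Γ t ω)) = 0 := by
  have htmem : t ∈ Icc 0 t := right_mem_Icc.2 ht.le
  have hrv : HasDerivWithinAt r (derivWithin r (Icc 0 t) t) (Icc 0 t) t :=
    (hr.differentiableOn one_ne_zero t htmem).hasDerivWithinAt
  have hchain := hasDerivWithinAt_comp_path (hu.differentiable one_ne_zero (t, r t)) hrv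
  have hinteraction : ContinuousOn (fun s => ∫ ω in Ioo (0:ℝ) 1, Φ (r s - Γ s ω)) (Icc 0 t) :=
    continuousOn_integral_comp_sub hΦ.continuous isCompact_Icc hr.continuousOn
      (hΓb.imp fun C hC s _ => hC s)
      (fun s _ => (hΓm.comp measurable_prodMk_left).aestronglyMeasurable)
      (fun ω => (hΓc ω).continuousOn)
  have hintegrand : ContinuousOn
      (fun s => L (r s) (derivWithin r (Icc 0 t) s) + ∫ ω in Ioo (0:ℝ) 1, Φ (r s - Γ s ω))
      (Icc 0 t) :=
    (hL.continuous.comp_continuousOn (hr.continuousOn.prodMk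
      (hr.continuousOn_derivWithin (uniqueDiffOn_Icc ht) le_rfl))).add hinteraction
  have hFTC := ((hasDerivWithinAt_setIntegral_Icc_right ht hintegrand).add_const
    (∫ ω in Ioo (0:ℝ) 1, Ψ (r 0 - Γ 0 ω))).congr hval (hval t htmem)
  have hderiv := (uniqueDiffOn_Icc ht t htmem).eq_deriv _ hchain hFTC
  subst hrt
  rw [hgrad, real_inner_comm, ← hLegendre] at hderiv
  rw [hgrad]
  linarith

/-- If `u` is `C¹`, `r` is a `C¹` path with `r(t) = q` along which the value identity (i)
holds, the gradient identity (ii) `∇_q u(t,r(t)) = ∇_v L(r(t),ṙ(t))` holds, and `H` satisfies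
the Legendre identity (iii), then `u` satisfies the Hamilton–Jacobi equation at `(t,q)`:
`∂_t u(t,q) + H(q, ∇_q u(t,q)) − ∫_Ω Φ(q − Γ(t,ω̃)) dω̃ = 0`. -/
theorem hamilton_jacobi_at_terminal_point
    (d : ℕ) (hd : 1 ≤ d)
    (L : EuclideanSpace ℝ (Fin d) → EuclideanSpace ℝ (Fin d) → ℝ)
    (Φ Ψ : EuclideanSpace ℝ (Fin d) → ℝ)
    (Γ : ℝ → ℝ → EuclideanSpace ℝ (Fin d))
    (T t : ℝ) (ht : 0 < t) (htT : t ≤ T)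
    -- `L`, `Φ`, `Ψ` are `C³`; `Φ`, `Ψ` even with bounded derivatives of order 1,2,3
    (hL : ContDiff ℝ 3 (fun p : EuclideanSpace ℝ (Fin d) × EuclideanSpace ℝ (Fin d) => L p.1 p.2))
    (hΦ : ContDiff ℝ 3 Φ) (hΨ : ContDiff ℝ 3 Ψ)
    (hΦe : ∀ x, Φ (-x) = Φ x) (hΨe : ∀ x, Ψ (-x) = Ψ x)
    (hΦd : ∀ i, 1 ≤ i → i ≤ 3 → ∃ C, ∀ x, ‖iteratedFDeriv ℝ i Φ x‖ ≤ C)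
    (hΨd : ∀ i, 1 ≤ i → i ≤ 3 → ∃ C, ∀ x, ‖iteratedFDeriv ℝ i Ψ x‖ ≤ C)
    -- `Γ` is jointly measurable, bounded, continuous in time
    (hΓm : Measurable (fun p : ℝ × ℝ => Γ p.1 p.2))
    (hΓb : ∃ C, ∀ s ω, ‖Γ s ω‖ ≤ C)
    (hΓc : ∀ ω, Continuous (fun s => Γ s ω))
    (q : EuclideanSpace ℝ (Fin d))
    (H : EuclideanSpace ℝ (Fin d) → EuclideanSpace ℝ (Fin d) → ℝ)
    (u : ℝ → EuclideanSpace ℝ (Fin d) → ℝ)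
    (hu : ContDiff ℝ 1 (fun p : ℝ × EuclideanSpace ℝ (Fin d) => u p.1 p.2))
    (r : ℝ → EuclideanSpace ℝ (Fin d))
    (hr : ContDiffOn ℝ 1 r (Icc 0 t)) (hrt : r t = q)
    -- (i) the value identity along `r`
    (hval : ∀ τ ∈ Icc (0:ℝ) t,
      u τ (r τ) =
        (∫ s in Icc (0:ℝ) τ,
            (L (r s) (derivWithin r (Icc (0:ℝ) t) s)
              + ∫ ω in Ioo (0:ℝ) 1, Φ (r s - Γ s ω)))
          + ∫ ω in Ioo (0:ℝ) 1, Ψ (r 0 - Γ 0 ω))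
    -- (ii) `∇_q u(t, r(t)) = ∇_v L(r(t), ṙ(t))`
    (hgrad : gradient (u t) (r t) =
      gradient (fun v => L (r t) v) (derivWithin r (Icc (0:ℝ) t) t))
    -- (iii) the Legendre identity for `H`
    (hLegendre : ∀ q' v : EuclideanSpace ℝ (Fin d),
      L q' v + H q' (gradient (fun v' => L q' v') v) =
        ⟪v, gradient (fun v' => L q' v') v⟫) :
    deriv (fun s => u s q) t + H q (gradient (u t) q)
      - (∫ ω in Ioo (0:ℝ) 1, Φ (q - Γ t ω)) = 0 :=
  hamilton_jacobi_at_terminal_point_general d L Φ Ψ Γ t ht hL hΦ hΓm hΓb hΓc q H u hu r hr hrt hval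
    hgrad hLegendre
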